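/- Let f ∈ C¹(R^d) with |∂^α f(x)| ≤ C_α ⟨x⟩^{-(1+δ_α)} for all |α| = 1, where δ_α > 0. Define F(x,y,z) = ∫₀¹∫₀¹ σ₁ f(z + σ₁(x−z) + σ₁σ₂(y−x)) dσ₁ dσ₂. Then for each multi-index (α,β,γ) with |α+β+γ| = 1 there is a constant C such that |x−z| · |∂_x^α ∂_y^β ∂_z^γ F(x,y,z)| ≤ C for all x, y, z ∈ R^d. -/

import Mathlib

/-!
Differentiating under the integral sign, `DF(x, y, z)` is an average of `σ₁ Df` over the broken
path `γ(σ₁, σ₂) = z + σ₁(x − z) + σ₁σ₂(y − x)`, so it suffices to bound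
`|x − z| ∫∫ σ₁ ⟨γ⟩^{-(1+δ)}`. The weight is integrable along lines, uniformly in their position:
`|b| ∫₀¹ ⟨a + σb⟩^{-(1+δ)} dσ ≤ ∫_ℝ ⟨u⟩^{-(1+δ)} du`. If `|x − z| ≤ 2|y − x|`, integrate first in
`σ₂`, along segments of direction `σ₁(y − x)` (the factor `σ₁` compensates their length);
otherwise integrate first in `σ₁`, along segments of direction `(x − z) + σ₂(y − x)`, whose norm
is at least `|x − z| / 2`.
-/

open Real intervalIntegral MeasureTheory Set

noncomputable section

theorem mul_integral_unitInterval_le_of_forall_mem {g : ℝ → ℝ} {c M : ℝ}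
    (hg : IntervalIntegrable g volume 0 1) (h : ∀ s ∈ Icc (0:ℝ) 1, c * g s ≤ M) :
    c * ∫ s in (0:ℝ)..1, g s ≤ M := by
  rw [← intervalIntegral.integral_const_mul]
  calc ∫ s in (0:ℝ)..1, c * g s ≤ ∫ _ in (0:ℝ)..1, M :=
        integral_mono_on zero_le_one (hg.const_mul c) intervalIntegrable_const h
    _ = M := by simp

theorem intervalIntegral_swap_of_continuous {G : Type*} [NormedAddCommGroup G] [NormedSpace ℝ G]
    {f : ℝ → ℝ → G} (hf : Continuous (Function.uncurry f)) {a b c d : ℝ} (hab : a ≤ b)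
    (hcd : c ≤ d) :
    ∫ x in a..b, ∫ y in c..d, f x y = ∫ y in c..d, ∫ x in a..b, f x y := by
  simp only [integral_of_le hab, integral_of_le hcd]
  refine integral_integral_swap ?_
  rw [Measure.prod_restrict]
  exact (hf.continuousOn.integrableOn_compact (isCompact_Icc.prod isCompact_Icc)).mono_set
    (prod_mono Ioc_subset_Icc_self Ioc_subset_Icc_self)

theorem hasFDerivAt_intervalIntegral_of_norm_le {P G : Type*} [NormedAddCommGroup P]
    [NormedSpace ℝ P] [NormedAddCommGroup G] [NormedSpace ℝ G] {F : P → ℝ → G}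
    {F' : P → ℝ → P →L[ℝ] G} {C a b : ℝ} {p₀ : P} (hab : a ≤ b) (hF : ∀ p, Continuous (F p))
    (hF' : Continuous (F' p₀)) (h_bound : ∀ p, ∀ t ∈ Icc a b, ‖F' p t‖ ≤ C)
    (h_diff : ∀ p, ∀ t ∈ Icc a b, HasFDerivAt (F · t) (F' p t) p) :
    HasFDerivAt (fun p => ∫ t in a..b, F p t) (∫ t in a..b, F' p₀ t) p₀ := by
  have hIcc : ∀ t ∈ uIoc a b, t ∈ Icc a b := fun t ht =>
    Ioc_subset_Icc_self (by rwa [uIoc_of_le hab] at ht)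
  exact hasFDerivAt_integral_of_dominated_of_fderiv_le (bound := fun _ => C) Filter.univ_mem
    (.of_forall fun p => (hF p).aestronglyMeasurable) ((hF p₀).intervalIntegrable _ _)
    hF'.aestronglyMeasurable (.of_forall fun t ht p _ => h_bound p t (hIcc t ht))
    intervalIntegrable_const (.of_forall fun t ht p _ => h_diff p t (hIcc t ht))

theorem ContinuousLinearMap.norm_le_sum_abs_apply_single {ι : Type*} [Fintype ι]
    [DecidableEq ι] (ℓ : EuclideanSpace ℝ ι →L[ℝ] ℝ) :
    ‖ℓ‖ ≤ ∑ i, |ℓ (EuclideanSpace.single i 1)| := by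
  refine ℓ.opNorm_le_bound (by positivity) fun v => ?_
  have hv : v = ∑ i, v i • EuclideanSpace.single i (1:ℝ) := by
    ext j
    simp [Pi.single_apply]
  calc ‖ℓ v‖ = |∑ i, v i * ℓ (EuclideanSpace.single i 1)| := by
        conv_lhs => rw [hv]
        simp [Real.norm_eq_abs]
    _ ≤ ∑ i, |v i| * |ℓ (EuclideanSpace.single i 1)| :=
        (Finset.abs_sum_le_sum_abs _ _).trans_eq (by simp only [abs_mul])
    _ ≤ ∑ i, ‖v‖ * |ℓ (EuclideanSpace.single i 1)| := by
        gcongr with i; exact PiLp.norm_apply_le v i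
    _ = (∑ i, |ℓ (EuclideanSpace.single i 1)|) * ‖v‖ := by rw [← Finset.mul_sum, mul_comm]

section DecayWeight

variable {E F : Type*}

def decayWeight [Norm E] (δ : ℝ) (u : E) : ℝ := (1 + ‖u‖ ^ 2) ^ (-(1 + δ) / 2 : ℝ)

theorem decayWeight_nonneg [Norm E] (δ : ℝ) (u : E) : 0 ≤ decayWeight δ u :=
  rpow_nonneg (by positivity) _

theorem decayWeight_le_of_norm_le [SeminormedAddGroup E] [SeminormedAddGroup F] {δ : ℝ}
    (hδ : -1 ≤ δ) {u : E} {v : F} (h : ‖v‖ ≤ ‖u‖) : decayWeight δ u ≤ decayWeight δ v :=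
  rpow_le_rpow_of_nonpos (by positivity) (by gcongr) (by linarith)

theorem decayWeight_le_one [Norm E] {δ : ℝ} (hδ : -1 ≤ δ) (u : E) : decayWeight δ u ≤ 1 :=
  rpow_le_one_of_one_le_of_nonpos (by nlinarith [sq_nonneg ‖u‖]) (by linarith)

theorem decayWeight_antitone [Norm E] (u : E) : Antitone fun δ : ℝ => decayWeight δ u :=
  fun _ _ h => rpow_le_rpow_of_exponent_le (by nlinarith [sq_nonneg ‖u‖]) (by linarith)

@[fun_prop]
theorem continuous_decayWeight [SeminormedAddCommGroup E] (δ : ℝ) :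
    Continuous (decayWeight δ : E → ℝ) :=
  (continuous_const.add (continuous_norm.pow 2)).rpow_const fun u =>
    .inl (by positivity : (0:ℝ) < 1 + ‖u‖ ^ 2).ne'

theorem integrable_decayWeight {δ : ℝ} (hδ : 0 < δ) : Integrable (decayWeight δ : ℝ → ℝ) :=
  integrable_rpow_neg_one_add_norm_sq (by simpa using hδ)

theorem exists_norm_fderiv_le_mul_decayWeight {ι : Type*} [Fintype ι] [DecidableEq ι]
    {f : EuclideanSpace ℝ ι → ℝ}
    (hder : ∀ i, ∃ C δ : ℝ, 0 < C ∧ 0 < δ ∧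
      ∀ x, |fderiv ℝ f x (EuclideanSpace.single i 1)| ≤ C * decayWeight δ x) :
    ∃ C δ : ℝ, 0 ≤ C ∧ 0 < δ ∧ ∀ u, ‖fderiv ℝ f u‖ ≤ C * decayWeight δ u := by
  choose C δ hC hδ hbound using hder
  set δ₀ := (insert 1 (Finset.univ.image δ)).min' (Finset.insert_nonempty _ _)
  have hδ₀ : 0 < δ₀ := by
    simp only [δ₀, Finset.lt_min'_iff, Finset.mem_insert, Finset.mem_image]
    rintro _ (rfl | ⟨i, -, rfl⟩)
    exacts [one_pos, hδ i]
  have hδ₀_le : ∀ i, δ₀ ≤ δ i := fun i =>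
    Finset.min'_le _ _ (Finset.mem_insert_of_mem (Finset.mem_image_of_mem _ (Finset.mem_univ i)))
  refine ⟨∑ i, C i, δ₀, Finset.sum_nonneg fun i _ => (hC i).le, hδ₀, fun u => ?_⟩
  calc ‖fderiv ℝ f u‖ ≤ ∑ i, |fderiv ℝ f u (EuclideanSpace.single i 1)| :=
        (fderiv ℝ f u).norm_le_sum_abs_apply_single
    _ ≤ ∑ i, C i * decayWeight δ₀ u := by
        gcongr with i
        exact (hbound i u).trans
          (mul_le_mul_of_nonneg_left (decayWeight_antitone u (hδ₀_le i)) (hC i).le)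
    _ = (∑ i, C i) * decayWeight δ₀ u := by rw [Finset.sum_mul]

end DecayWeight

section LineIntegral

variable {E : Type*} [NormedAddCommGroup E] [InnerProductSpace ℝ E]

theorem abs_norm_mul_add_inner_div_le (a b : E) (σ : ℝ) :
    |‖b‖ * σ + inner ℝ a b / ‖b‖| ≤ ‖a + σ • b‖ := by
  rcases eq_or_ne b 0 with rfl | hb
  · simp
  have hb' : 0 < ‖b‖ := norm_pos_iff.mpr hb
  have hinner : ‖b‖ * (‖b‖ * σ + inner ℝ a b / ‖b‖) = inner ℝ (a + σ • b) b := by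
    rw [inner_add_left, real_inner_smul_left, real_inner_self_eq_norm_sq]
    field_simp
    ring
  refine le_of_mul_le_mul_left ?_ hb'
  calc ‖b‖ * |‖b‖ * σ + inner ℝ a b / ‖b‖| = |inner ℝ (a + σ • b) b| := by
        rw [← hinner, abs_mul, abs_of_pos hb']
    _ ≤ ‖b‖ * ‖a + σ • b‖ := (abs_real_inner_le_norm _ _).trans_eq (mul_comm _ _)

theorem norm_mul_integral_decayWeight_line_le {δ : ℝ} (hδ : 0 < δ) (a b : E) :
    ‖b‖ * ∫ σ in (0:ℝ)..1, decayWeight δ (a + σ • b) ≤ ∫ u : ℝ, decayWeight δ u := by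
  have hI : 0 ≤ ∫ u : ℝ, decayWeight δ u := integral_nonneg (decayWeight_nonneg δ)
  rcases eq_or_ne b 0 with rfl | hb
  · simpa using hI
  set c := inner ℝ a b / ‖b‖
  have hb' : 0 < ‖b‖ := norm_pos_iff.mpr hb
  calc ‖b‖ * ∫ σ in (0:ℝ)..1, decayWeight δ (a + σ • b)
      ≤ ‖b‖ * ∫ σ in (0:ℝ)..1, decayWeight δ (‖b‖ * σ + c) := by
        gcongr
        refine integral_mono_on zero_le_one
          (Continuous.intervalIntegrable (by fun_prop) _ _)
          (Continuous.intervalIntegrable (by fun_prop) _ _) fun σ _ => ?_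
        exact decayWeight_le_of_norm_le (by linarith) (abs_norm_mul_add_inner_div_le a b σ)
    _ = ∫ u in c..‖b‖ + c, decayWeight δ u := by
        rw [integral_comp_mul_add (decayWeight δ) hb'.ne', smul_eq_mul,
          mul_inv_cancel_left₀ hb'.ne']
        simp
    _ ≤ ∫ u : ℝ, decayWeight δ u := by
        rw [integral_of_le (by linarith)]
        exact setIntegral_le_integral (integrable_decayWeight hδ)
          (.of_forall (decayWeight_nonneg δ))

end LineIntegral

section BrokenPath

variable {E G : Type*} [NormedAddCommGroup E] [NormedSpace ℝ E]
  [NormedAddCommGroup G] [NormedSpace ℝ G]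

def brokenPath (s t : ℝ) : E × E × E →L[ℝ] E :=
  .snd ℝ E E ∘L .snd ℝ E (E × E) + s • (.fst ℝ E (E × E) - .snd ℝ E E ∘L .snd ℝ E (E × E)) +
    (s * t) • (.fst ℝ E E ∘L .snd ℝ E (E × E) - .fst ℝ E (E × E))

theorem brokenPath_apply (s t : ℝ) (p : E × E × E) :
    brokenPath s t p = p.2.2 + s • (p.1 - p.2.2) + (s * t) • (p.2.1 - p.1) := rfl

theorem norm_brokenPath_le_one {s t : ℝ} (hs : s ∈ Icc (0:ℝ) 1) (ht : t ∈ Icc (0:ℝ) 1) :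
    ‖(brokenPath s t : E × E × E →L[ℝ] E)‖ ≤ 1 := by
  obtain ⟨hs0, hs1⟩ := hs
  obtain ⟨ht0, ht1⟩ := ht
  refine ContinuousLinearMap.opNorm_le_bound _ zero_le_one fun p => ?_
  have h1 : ‖p.1‖ ≤ ‖p‖ := norm_fst_le p
  have h2 : ‖p.2.1‖ ≤ ‖p‖ := (norm_fst_le p.2).trans (norm_snd_le p)
  have h3 : ‖p.2.2‖ ≤ ‖p‖ := (norm_snd_le p.2).trans (norm_snd_le p)
  have hst : s * t ≤ s := mul_le_of_le_one_right hs0 ht1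
  have hcomb : brokenPath s t p = (s - s * t) • p.1 + (s * t) • p.2.1 + (1 - s) • p.2.2 := by
    rw [brokenPath_apply]; module
  calc ‖brokenPath s t p‖
      ≤ ‖(s - s * t) • p.1‖ + ‖(s * t) • p.2.1‖ + ‖(1 - s) • p.2.2‖ := hcomb ▸ norm_add₃_le
    _ ≤ (s - s * t) * ‖p‖ + (s * t) * ‖p‖ + (1 - s) * ‖p‖ := by
        simp only [norm_smul, Real.norm_eq_abs]
        rw [abs_of_nonneg (by linarith), abs_of_nonneg (by positivity),
          abs_of_nonneg (by linarith)]
        gcongr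
    _ = 1 * ‖p‖ := by ring

@[fun_prop]
theorem Continuous.brokenPath {X : Type*} [TopologicalSpace X] {s t : X → ℝ}
    (hs : Continuous s) (ht : Continuous t) :
    Continuous fun x => (brokenPath (s x) (t x) : E × E × E →L[ℝ] E) := by
  unfold _root_.brokenPath
  fun_prop

def brokenPathAverage (g : E → G) (p : E × E × E) : G :=
  ∫ s in (0:ℝ)..1, ∫ t in (0:ℝ)..1, s • g (brokenPath s t p)

theorem brokenPathAverage_const_smul (c : ℝ) (g : E → G) (p : E × E × E) :
    brokenPathAverage (c • g) p = c • brokenPathAverage g p := by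
  simp only [brokenPathAverage, Pi.smul_apply, smul_comm _ c, intervalIntegral.integral_smul]

end BrokenPath

section Derivative

variable {E G : Type*} [NormedAddCommGroup E] [NormedSpace ℝ E]
  [NormedAddCommGroup G] [NormedSpace ℝ G] {f : E → G}

theorem norm_smul_fderiv_comp_brokenPath_le {s t : ℝ} (hs : s ∈ Icc (0:ℝ) 1)
    (ht : t ∈ Icc (0:ℝ) 1) (p : E × E × E) :
    ‖s • (fderiv ℝ f (brokenPath s t p)).comp (brokenPath s t)‖ ≤
      s * ‖fderiv ℝ f (brokenPath s t p)‖ := by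
  rw [norm_smul, Real.norm_of_nonneg hs.1]
  exact mul_le_mul_of_nonneg_left ((ContinuousLinearMap.opNorm_comp_le _ _).trans
    (mul_le_of_le_one_right (norm_nonneg _) (norm_brokenPath_le_one hs ht))) hs.1

theorem hasFDerivAt_brokenPathAverage (hf : ContDiff ℝ 1 f) {C : ℝ}
    (hC : ∀ u, ‖fderiv ℝ f u‖ ≤ C) (p₀ : E × E × E) :
    HasFDerivAt (brokenPathAverage f)
      (∫ s in (0:ℝ)..1, ∫ t in (0:ℝ)..1,
        s • (fderiv ℝ f (brokenPath s t p₀)).comp (brokenPath s t)) p₀ := by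
  have h_bound : ∀ p, ∀ s ∈ Icc (0:ℝ) 1, ∀ t ∈ Icc (0:ℝ) 1,
      ‖s • (fderiv ℝ f (brokenPath s t p)).comp (brokenPath s t)‖ ≤ C := fun p s hs t ht =>
    (norm_smul_fderiv_comp_brokenPath_le hs ht p).trans
      ((mul_le_of_le_one_left (norm_nonneg _) hs.2).trans (hC _))
  have h_inner : ∀ p, ∀ s ∈ Icc (0:ℝ) 1,
      HasFDerivAt (fun p => ∫ t in (0:ℝ)..1, s • f (brokenPath s t p))
      (∫ t in (0:ℝ)..1, s • (fderiv ℝ f (brokenPath s t p)).comp (brokenPath s t)) p :=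
    fun p s hs => hasFDerivAt_intervalIntegral_of_norm_le zero_le_one (fun _ => by fun_prop)
      (by fun_prop) (h_bound · s hs) fun p t _ =>
        ((hf.differentiable one_ne_zero _).hasFDerivAt.comp p
          (brokenPath s t : E × E × E →L[ℝ] E).hasFDerivAt).const_smul s
  unfold brokenPathAverage
  refine hasFDerivAt_intervalIntegral_of_norm_le (C := C) zero_le_one (fun _ => by fun_prop)
    (by fun_prop) (fun p s hs => ?_) h_inner
  simpa using norm_integral_le_of_norm_le_const (a := 0) (b := 1) fun t ht =>
    h_bound p s hs t (Ioc_subset_Icc_self (by rwa [uIoc_of_le zero_le_one] at ht))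

theorem norm_integral_fderiv_brokenPath_le {g : E → ℝ} (hg : Continuous g)
    (hfg : ∀ u, ‖fderiv ℝ f u‖ ≤ g u) (p : E × E × E) :
    ‖∫ s in (0:ℝ)..1, ∫ t in (0:ℝ)..1,
        s • (fderiv ℝ f (brokenPath s t p)).comp (brokenPath s t)‖ ≤ brokenPathAverage g p := by
  refine norm_integral_le_of_norm_le zero_le_one (.of_forall fun s hs => ?_)
    (Continuous.intervalIntegrable (by fun_prop) _ _)
  refine norm_integral_le_of_norm_le zero_le_one (.of_forall fun t ht => ?_)
    (Continuous.intervalIntegrable (by fun_prop) _ _)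
  exact (norm_smul_fderiv_comp_brokenPath_le (Ioc_subset_Icc_self hs)
    (Ioc_subset_Icc_self ht) p).trans (mul_le_mul_of_nonneg_left (hfg _) hs.1.le)

end Derivative

section Geometry

variable {E : Type*} [NormedAddCommGroup E] [InnerProductSpace ℝ E]

theorem brokenPathAverage_decayWeight_nonneg (δ : ℝ) (p : E × E × E) :
    0 ≤ brokenPathAverage (decayWeight δ) p :=
  integral_nonneg zero_le_one fun _ hs => integral_nonneg zero_le_one
    fun _ _ => smul_nonneg hs.1 (decayWeight_nonneg δ _)

theorem norm_sub_mul_brokenPathAverage_decayWeight_le_integral {δ : ℝ} (hδ : 0 < δ)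
    (x y z : E) :
    ‖y - x‖ * brokenPathAverage (decayWeight δ) (x, y, z) ≤ ∫ u : ℝ, decayWeight δ u := by
  refine mul_integral_unitInterval_le_of_forall_mem
    (Continuous.intervalIntegrable (by fun_prop) _ _) fun s hs => ?_
  have hpath : ∀ t, brokenPath s t (x, y, z) = (z + s • (x - z)) + t • s • (y - x) :=
    fun t => by rw [brokenPath_apply, mul_comm, mul_smul]
  simp only [hpath, smul_eq_mul, intervalIntegral.integral_const_mul]
  calc ‖y - x‖ * (s * ∫ t in (0:ℝ)..1, decayWeight δ (z + s • (x - z) + t • s • (y - x)))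
      = ‖s • (y - x)‖ * ∫ t in (0:ℝ)..1, decayWeight δ (z + s • (x - z) + t • s • (y - x)) := by
        rw [norm_smul, Real.norm_of_nonneg hs.1]; ring
    _ ≤ ∫ u : ℝ, decayWeight δ u := norm_mul_integral_decayWeight_line_le hδ _ _

theorem norm_sub_mul_brokenPathAverage_decayWeight_le_of_two_mul_le {δ : ℝ} (hδ : 0 < δ)
    {x y z : E} (h : 2 * ‖y - x‖ ≤ ‖x - z‖) :
    ‖x - z‖ * brokenPathAverage (decayWeight δ) (x, y, z) ≤ 2 * ∫ u : ℝ, decayWeight δ u := by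
  rw [brokenPathAverage, intervalIntegral_swap_of_continuous (by fun_prop) zero_le_one zero_le_one]
  refine mul_integral_unitInterval_le_of_forall_mem
    (Continuous.intervalIntegrable (by fun_prop) _ _) fun t ht => ?_
  set v := (x - z) + t • (y - x)
  have hpath : ∀ s, brokenPath s t (x, y, z) = z + s • v := fun s => by
    rw [brokenPath_apply]; module
  have hv : ‖x - z‖ ≤ 2 * ‖v‖ := by
    have h₁ : ‖x - z‖ ≤ ‖v‖ + ‖t • (y - x)‖ := by
      simpa [v] using norm_sub_le v (t • (y - x))
    have h₂ : ‖t • (y - x)‖ ≤ ‖y - x‖ := by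
      rw [norm_smul, Real.norm_of_nonneg ht.1]
      exact mul_le_of_le_one_left (norm_nonneg _) ht.2
    linarith
  have hline : 0 ≤ ∫ s in (0:ℝ)..1, decayWeight δ (z + s • v) :=
    integral_nonneg zero_le_one fun _ _ => decayWeight_nonneg δ _
  simp only [hpath]
  calc ‖x - z‖ * ∫ s in (0:ℝ)..1, s • decayWeight δ (z + s • v)
      ≤ ‖x - z‖ * ∫ s in (0:ℝ)..1, decayWeight δ (z + s • v) := by
        gcongr
        refine integral_mono_on zero_le_one (Continuous.intervalIntegrable (by fun_prop) _ _)
          (Continuous.intervalIntegrable (by fun_prop) _ _) fun s hs => ?_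
        exact mul_le_of_le_one_left (decayWeight_nonneg δ _) hs.2
    _ ≤ 2 * (‖v‖ * ∫ s in (0:ℝ)..1, decayWeight δ (z + s • v)) := by
        rw [← mul_assoc]; gcongr
    _ ≤ 2 * ∫ u : ℝ, decayWeight δ u := by
        gcongr; exact norm_mul_integral_decayWeight_line_le hδ _ _

theorem norm_sub_mul_brokenPathAverage_decayWeight_le {δ : ℝ} (hδ : 0 < δ) (x y z : E) :
    ‖x - z‖ * brokenPathAverage (decayWeight δ) (x, y, z) ≤ 2 * ∫ u : ℝ, decayWeight δ u := by
  rcases le_total ‖x - z‖ (2 * ‖y - x‖) with h | h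
  · have := norm_sub_mul_brokenPathAverage_decayWeight_le_integral hδ x y z
    have := brokenPathAverage_decayWeight_nonneg δ (x, y, z)
    nlinarith
  · exact norm_sub_mul_brokenPathAverage_decayWeight_le_of_two_mul_le hδ h

end Geometry

end

/-- Lemma 7.1 (2): with
`F(x,y,z) = ∫₀¹∫₀¹ σ₁ f(z + σ₁(x−z) + σ₁σ₂(y−x)) dσ₂ dσ₁`, every first-order
derivative of `F` satisfies `|x−z| |∂F| ≤ C` uniformly, provided all first
derivatives of `f` decay like `⟨x⟩^{-(1+δ)}`. -/
theorem broken_path_average_derivative_bound (d : ℕ)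
    (f : EuclideanSpace ℝ (Fin d) → ℝ) (hf : ContDiff ℝ 1 f)
    (hder : ∀ i : Fin d, ∃ C δ : ℝ, 0 < C ∧ 0 < δ ∧ ∀ x,
      |fderiv ℝ f x (EuclideanSpace.single i 1)| ≤
        C * (1 + ‖x‖ ^ 2) ^ (-(1 + δ) / 2 : ℝ)) :
    ∃ C : ℝ, ∀ x y z : EuclideanSpace ℝ (Fin d),
      ‖x - z‖ *
        ‖fderiv ℝ
          (fun p : EuclideanSpace ℝ (Fin d) × EuclideanSpace ℝ (Fin d) ×
              EuclideanSpace ℝ (Fin d) =>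
            ∫ σ₁ in (0:ℝ)..1, ∫ σ₂ in (0:ℝ)..1,
              σ₁ * f (p.2.2 + σ₁ • (p.1 - p.2.2) + (σ₁ * σ₂) • (p.2.1 - p.1)))
          (x, y, z)‖ ≤ C := by
  obtain ⟨C, δ, hC, hδ, hDf⟩ := exists_norm_fderiv_le_mul_decayWeight hder
  have hDf_bdd : ∀ u, ‖fderiv ℝ f u‖ ≤ C := fun u =>
    (hDf u).trans (mul_le_of_le_one_right hC (decayWeight_le_one (by linarith) u))
  refine ⟨C * (2 * ∫ u : ℝ, decayWeight δ u), fun x y z => ?_⟩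
  change ‖x - z‖ * ‖fderiv ℝ (brokenPathAverage f) (x, y, z)‖ ≤ _
  rw [(hasFDerivAt_brokenPathAverage hf hDf_bdd (x, y, z)).fderiv]
  calc _ ≤ ‖x - z‖ * brokenPathAverage (C • decayWeight δ) (x, y, z) := by
        gcongr; exact norm_integral_fderiv_brokenPath_le (by fun_prop) hDf _
    _ = C * (‖x - z‖ * brokenPathAverage (decayWeight δ) (x, y, z)) := by
        rw [brokenPathAverage_const_smul, smul_eq_mul]; ring
    _ ≤ C * (2 * ∫ u : ℝ, decayWeight δ u) :=
        mul_le_mul_of_nonneg_left (norm_sub_mul_brokenPathAverage_decayWeight_le hδ x y z) hC
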